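/- Let (E, σ, τ, ε) be any signed chord diagram, let m be a state, and let m' be the state obtained from m by changing the marker on a single chord {x, τ x}. Then the numbers of components of the two smoothings differ by at most one: ||m'| − |m|| ≤ 1. (A Morse modification of a closed 1-manifold changes the number of connected components by one if it preserves orientation and preserves the number of components otherwise; in particular, unlike the classical case, for a general — e.g. virtual — diagram the number of components of a smoothing may be unchanged by a marker change.) -/

import Mathlib

/-!
Let `H` and `H'` be the groups generated by `α, μ_m` and by `α, μ_{m'}`. Off the chord
`{x, τ x}` the involutions `μ_m` and `μ_{m'}` agree, and on its four ends `μ_{m'}` is `μ_m`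
composed with switching the end `(y, s) ↦ (y, !s)`. Since `μ_m` maps the ends over `τ x` to
those over `x`, every `μ_{m'} p` lies in the `H`-orbit of `p`, or `p` and `μ_{m'} p` lie in
the `H`-orbits of `(x, true)` and `(x, false)`. So the `H'`-orbits refine the partition into
`H`-orbits with those two merged, which has at least `|m| - 1` blocks: `|m| ≤ |m'| + 1`,
and symmetrically.
-/

open LaurentPolynomial

/-- The involution `α` on `E × Bool` matching the two ends of each base arc:
`α (x, false) = (σ x, true)` and `α (x, true) = (σ⁻¹ x, false)`. -/
def alphaPerm {E : Type*} (σ : Equiv.Perm E) : Equiv.Perm (E × Bool) :=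
  Function.Involutive.toPerm
    (fun p => if p.2 then (σ⁻¹ p.1, false) else (σ p.1, true))
    (by rintro ⟨x, _ | _⟩ <;> simp)

/-- The involution `μ_m` on `E × Bool` defined by a state `m` of a signed chord
diagram: it sends `(x, true) ↦ (τ x, false)` and `(x, false) ↦ (τ x, true)` when
`m x = ε x`, and `(x, true) ↦ (τ x, true)`, `(x, false) ↦ (τ x, false)` otherwise. -/
def muPerm {E : Type*} (τ : Equiv.Perm E) (ε m : E → Bool)
    (hτ : ∀ x, τ (τ x) = x) (hε : ∀ x, ε (τ x) = ε x) (hm : ∀ x, m (τ x) = m x) :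
    Equiv.Perm (E × Bool) :=
  Function.Involutive.toPerm
    (fun p => (τ p.1, if m p.1 = ε p.1 then !p.2 else p.2))
    (by rintro ⟨x, b⟩; by_cases h : m x = ε x <;> simp [h, hτ, hε, hm])

/-- `|m|`: the number of orbits on `E × Bool` of the subgroup of `Equiv.Perm (E × Bool)`
generated by `α` and `μ_m`, i.e. the number of components of the smoothing of the
signed chord diagram along the state `m`. -/
noncomputable def numComponents {E : Type*} [Fintype E] [DecidableEq E]
    (σ τ : Equiv.Perm E) (ε m : E → Bool)
    (hτ : ∀ x, τ (τ x) = x) (hε : ∀ x, ε (τ x) = ε x) (hm : ∀ x, m (τ x) = m x) : ℕ :=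
  Nat.card (MulAction.orbitRel.Quotient
    (Subgroup.closure {alphaPerm σ, muPerm τ ε m hτ hε hm} : Subgroup (Equiv.Perm (E × Bool)))
    (E × Bool))

namespace Setoid

variable {X : Type*}

/-- The equivalence relation obtained from `r` by merging the classes of `a` and `b`. -/
def merge (r : Setoid X) (a b : X) : Setoid X where
  r u v := r u v ∨ (r u a ∧ r v b) ∨ (r u b ∧ r v a)
  iseqv := by
    have refl : ∀ x, r x x := r.refl
    have symm : ∀ {x y}, r x y → r y x := r.symm
    have trans : ∀ {x y z}, r x y → r y z → r x z := r.trans'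
    exact ⟨by grind, by grind, by grind⟩

variable {r s : Setoid X}

theorem le_merge (a b : X) : r ≤ r.merge a b :=
  le_def.2 Or.inl

theorem card_quotient_le_of_le [Finite X] (h : r ≤ s) :
    Nat.card (Quotient s) ≤ Nat.card (Quotient r) :=
  Nat.card_le_card_of_surjective _ (Quotient.map_surjective (f := id) (fun _ _ => le_def.1 h)
    Function.surjective_id)

theorem card_quotient_le_card_quotient_merge_add_one [Finite X] (a b : X) :
    Nat.card (Quotient r) ≤ Nat.card (Quotient (r.merge a b)) + 1 := by
  classical
  let π : Quotient r → Quotient (r.merge a b) := Quotient.map id fun _ _ => Or.inl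
  -- Away from the class of `b`, the projection `π` is injective.
  let f : Quotient r → Option (Quotient (r.merge a b)) :=
    fun c => if c = ⟦b⟧ then none else some (π c)
  have hf : Function.Injective f := by
    intro c d hcd
    induction c using Quotient.inductionOn with | h u =>
    induction d using Quotient.inductionOn with | h v =>
    simp only [f, Quotient.eq] at hcd ⊢
    split_ifs at hcd with hu hv hv
    · exact r.trans' hu (r.symm hv)
    rcases Quotient.exact (Option.some.inj hcd) with h | ⟨-, h⟩ | ⟨h, -⟩
    exacts [h, absurd h hv, absurd h hu]
  calc Nat.card (Quotient r) ≤ Nat.card (Option (Quotient (r.merge a b))) :=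
        Nat.card_le_card_of_injective f hf
    _ = Nat.card (Quotient (r.merge a b)) + 1 := Finite.card_option

end Setoid

theorem MulAction.orbitRel_closure_le {G X : Type*} [Group G] [MulAction G X] {T : Set G}
    {s : Setoid X} (h : ∀ g ∈ T, ∀ u : X, s (g • u) u) :
    orbitRel (Subgroup.closure T) X ≤ s := by
  have key : ∀ g ∈ Subgroup.closure T, ∀ u : X, s (g • u) u := by
    intro g hg
    induction hg using Subgroup.closure_induction with
    | mem g hg => exact h g hg
    | one => exact fun u => by rw [one_smul]
    | mul g k _ _ hg hk => exact fun u => by rw [mul_smul]; exact s.trans' (hg (k • u)) (hk u)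
    | inv g _ hg => exact fun u => by simpa using s.symm (hg (g⁻¹ • u))
  rintro u v ⟨⟨g, hg⟩, rfl⟩
  exact key g hg v

section ChordDiagram

open MulAction

variable {E : Type*} {σ τ : Equiv.Perm E} {ε m m' : E → Bool}
  {hτ : ∀ y, τ (τ y) = y} {hε : ∀ y, ε (τ y) = ε y}
  {hm : ∀ y, m (τ y) = m y} {hm' : ∀ y, m' (τ y) = m' y}

theorem muPerm_apply (p : E × Bool) :
    muPerm τ ε m hτ hε hm p = (τ p.1, if m p.1 = ε p.1 then !p.2 else p.2) :=
  rfl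

variable (σ τ ε m hτ hε hm) in
def smoothingGroup : Subgroup (Equiv.Perm (E × Bool)) :=
  Subgroup.closure {alphaPerm σ, muPerm τ ε m hτ hε hm}

theorem numComponents_eq_card [Fintype E] [DecidableEq E] :
    numComponents σ τ ε m hτ hε hm =
      Nat.card (orbitRel.Quotient (smoothingGroup σ τ ε m hτ hε hm) (E × Bool)) :=
  rfl

theorem orbitRel_muPerm_apply_self {H : Subgroup (Equiv.Perm (E × Bool))}
    (hμ : muPerm τ ε m hτ hε hm ∈ H) (p : E × Bool) :
    orbitRel H (E × Bool) (muPerm τ ε m hτ hε hm p) p :=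
  ⟨⟨_, hμ⟩, rfl⟩

theorem merge_orbitRel_not_of_mem_chord {H : Subgroup (Equiv.Perm (E × Bool))}
    (hμ : muPerm τ ε m hτ hε hm ∈ H) {x y : E} (hy : y = x ∨ y = τ x) (s : Bool) :
    (orbitRel H (E × Bool)).merge (x, true) (x, false) (y, !s) (y, s) := by
  set r := orbitRel H (E × Bool)
  have hx : ∀ t, r.merge (x, true) (x, false) (x, !t) (x, t) := by
    rintro (_ | _)
    exacts [Or.inr (Or.inl ⟨r.refl _, r.refl _⟩), Or.inr (Or.inr ⟨r.refl _, r.refl _⟩)]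
  rcases hy with rfl | rfl
  · exact hx s
  -- `μ_m` carries the two ends `(τ x, !s)`, `(τ x, s)` to the two ends over `x`.
  set t := (muPerm τ ε m hτ hε hm (τ x, s)).2
  have hs : muPerm τ ε m hτ hε hm (τ x, s) = (x, t) := by
    simp only [t, muPerm_apply, hτ]
  have hns : muPerm τ ε m hτ hε hm (τ x, !s) = (x, !t) := by
    simp only [t, muPerm_apply, hτ]
    split_ifs <;> rfl
  have h₁ := orbitRel_muPerm_apply_self hμ (τ x, !s)
  have h₂ := orbitRel_muPerm_apply_self hμ (τ x, s)
  rw [hs] at h₂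
  rw [hns] at h₁
  exact (r.merge _ _).trans' (Setoid.le_merge _ _ (r.symm' h₁))
    ((r.merge _ _).trans' (hx t) (Setoid.le_merge _ _ h₂))

theorem merge_orbitRel_muPerm_apply_self {H : Subgroup (Equiv.Perm (E × Bool))}
    (hμ : muPerm τ ε m hτ hε hm ∈ H) {x : E}
    (hother : ∀ y : E, y ≠ x → y ≠ τ x → m' y = m y) (p : E × Bool) :
    (orbitRel H (E × Bool)).merge (x, true) (x, false) (muPerm τ ε m' hτ hε hm' p) p := by
  obtain ⟨y, s⟩ := p
  set r := orbitRel H (E × Bool)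
  by_cases hy : m' y = m y
  · have : muPerm τ ε m' hτ hε hm' (y, s) = muPerm τ ε m hτ hε hm (y, s) := by
      simp only [muPerm_apply, hy]
    rw [this]
    exact Setoid.le_merge _ _ (orbitRel_muPerm_apply_self hμ _)
  · have : muPerm τ ε m' hτ hε hm' (y, s) = muPerm τ ε m hτ hε hm (y, !s) := by
      simp only [muPerm_apply, Bool.eq_not_of_ne hy]
      cases m y <;> cases ε y <;> cases s <;> rfl
    have hchord : y = x ∨ y = τ x := by
      by_contra! h
      exact hy (hother y h.1 h.2)
    rw [this]
    exact (r.merge _ _).trans' (Setoid.le_merge _ _ (orbitRel_muPerm_apply_self hμ _))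
      (merge_orbitRel_not_of_mem_chord hμ hchord s)

theorem orbitRel_smoothingGroup_le_merge {x : E}
    (hother : ∀ y : E, y ≠ x → y ≠ τ x → m' y = m y) :
    orbitRel (smoothingGroup σ τ ε m' hτ hε hm') (E × Bool) ≤
      (orbitRel (smoothingGroup σ τ ε m hτ hε hm) (E × Bool)).merge (x, true) (x, false) := by
  have hα : alphaPerm σ ∈ smoothingGroup σ τ ε m hτ hε hm := Subgroup.subset_closure (by simp)
  have hμ : muPerm τ ε m hτ hε hm ∈ smoothingGroup σ τ ε m hτ hε hm :=
    Subgroup.subset_closure (by simp)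
  refine orbitRel_closure_le ?_
  rintro g (rfl | rfl) p
  · exact Setoid.le_merge _ _ ⟨⟨_, hα⟩, rfl⟩
  · exact merge_orbitRel_muPerm_apply_self hμ hother p

theorem numComponents_le_numComponents_add_one [Fintype E] [DecidableEq E] {x : E}
    (hother : ∀ y : E, y ≠ x → y ≠ τ x → m' y = m y) :
    numComponents σ τ ε m hτ hε hm ≤ numComponents σ τ ε m' hτ hε hm' + 1 := by
  rw [numComponents_eq_card, numComponents_eq_card]
  exact (Setoid.card_quotient_le_card_quotient_merge_add_one _ _).trans <|
    Nat.add_le_add_right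
      (Setoid.card_quotient_le_of_le (orbitRel_smoothingGroup_le_merge hother)) 1

end ChordDiagram

theorem numComponents_changeMarker_le_one_general
    {E : Type*} [Fintype E] [DecidableEq E]
    (σ τ : Equiv.Perm E) (ε : E → Bool)
    (hτ : ∀ y : E, τ (τ y) = y)
    (hε : ∀ y : E, ε (τ y) = ε y)
    (m m' : E → Bool)
    (hm : ∀ y : E, m (τ y) = m y) (hm' : ∀ y : E, m' (τ y) = m' y)
    (x : E)
    (hother : ∀ y : E, y ≠ x → y ≠ τ x → m' y = m y) :
    |(numComponents σ τ ε m' hτ hε hm' : ℤ) - (numComponents σ τ ε m hτ hε hm : ℤ)| ≤ 1 := by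
  have h₁ : numComponents σ τ ε m hτ hε hm ≤ numComponents σ τ ε m' hτ hε hm' + 1 :=
    numComponents_le_numComponents_add_one hother
  have h₂ : numComponents σ τ ε m' hτ hε hm' ≤ numComponents σ τ ε m hτ hε hm + 1 :=
    numComponents_le_numComponents_add_one fun y hx hτx => (hother y hx hτx).symm
  rw [abs_le]
  omega

/-- For any signed chord diagram, changing the marker of a state on a single chord
`{x, τ x}` changes the number of components of the smoothing by at most one (a Morse
modification of a closed 1-manifold changes the number of components by one if it
preserves orientation, and preserves it otherwise). -/
theorem numComponents_changeMarker_le_one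
    {E : Type*} [Fintype E] [DecidableEq E]
    (σ τ : Equiv.Perm E) (ε : E → Bool)
    (hτ : ∀ y : E, τ (τ y) = y) (hτfix : ∀ y : E, τ y ≠ y)
    (hε : ∀ y : E, ε (τ y) = ε y)
    (m m' : E → Bool)
    (hm : ∀ y : E, m (τ y) = m y) (hm' : ∀ y : E, m' (τ y) = m' y)
    (x : E)
    (hx : m' x = !(m x)) (hτx : m' (τ x) = !(m (τ x)))
    (hother : ∀ y : E, y ≠ x → y ≠ τ x → m' y = m y) :
    |(numComponents σ τ ε m' hτ hε hm' : ℤ) - (numComponents σ τ ε m hτ hε hm : ℤ)| ≤ 1 :=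
  numComponents_changeMarker_le_one_general σ τ ε hτ hε m m' hm hm' x hother
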